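/- Fix an integer k ≥ 0 and an integer t ≥ k + 2. There exists a constant c_k > 0 depending only on k such that for every θ ∈ ℝ^t, the ordinary-least-squares residual satisfies ‖recenter(θ)‖_∞ ≤ c_k · t^k ‖D^{k+1} θ‖₁. -/

import Mathlib

open Matrix

/-- First-order discrete difference operator on sequences: `(D x)_j = x_{j+1} − x_j`. -/
noncomputable def diffOp : (ℕ → ℝ) → (ℕ → ℝ) := fun x j => x (j + 1) - x j

/-- `ℓ₁` norm of `D^{k+1} θ` for a vector `θ ∈ ℝ^t` (extended by `0` off-range;
only the in-range entries are used). -/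
noncomputable def tvNorm (k t : ℕ) (θ : Fin t → ℝ) : ℝ :=
  ∑ j ∈ Finset.range (t - (k + 1)),
    |diffOp^[k + 1] (fun i => if h : i < t then θ ⟨i, h⟩ else 0) j|

/-- The `t × (k+1)` design matrix with rows `(1, j, …, j^k)`, `j = 1,…,t`. -/
noncomputable def designMatR (t m : ℕ) : Matrix (Fin t) (Fin m) ℝ :=
  Matrix.of fun j i => ((j : ℕ) + 1 : ℝ) ^ (i : ℕ)

/-- Residual of the OLS fit of `θ` onto polynomials of degree at most `k`:
`recenter(θ) = θ − X_t (X_tᵀ X_t)⁻¹ X_tᵀ θ`. -/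
noncomputable def recenter (k t : ℕ) (θ : Fin t → ℝ) : Fin t → ℝ :=
  θ - (designMatR t (k + 1)).mulVec
    (((designMatR t (k + 1))ᵀ * designMatR t (k + 1))⁻¹.mulVec
      ((designMatR t (k + 1))ᵀ.mulVec θ))

open Polynomial Finset

/-!
Newton's forward-difference formula with remainder writes `θ = X a + w`, where `X a` is a
polynomial of degree `≤ k` sampled at `1, …, t` and every `|w_j|` is at most
`t^k ‖D^{k+1} θ‖₁`. Least squares reproduces `X a`, so `recenter θ = w - P w` for the hat
matrix `P = X (XᵀX)⁻¹ Xᵀ`, and `|(P w)_i| ≤ (∑_j |P_ij|) max_j |w_j|`. Since `P` is a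
symmetric projection, `(∑_j |P_ij|)² ≤ t P_ii`, and `t P_ii` is bounded by the discrete
Nikolskii inequality `t p(s)² ≤ C_k ∑_{j=1}^t p(j)²` for `deg p ≤ k`. For the latter, split
`{1, …, t}` into `m ≈ t / (k + 1)` arithmetic progressions of `k + 1` nodes with gap `m`:
Lagrange interpolation at each progression has weights at most `(t / m)^k ≤ (2 (k + 1))^k`
on `[1, t]`.
-/

lemma sum_range_succ_choose_mul (a : ℕ → ℝ) (n j : ℕ) :
    ∑ i ∈ range (n + 1), ((j + 1).choose i : ℝ) * a i =
      ∑ i ∈ range (n + 1), (j.choose i : ℝ) * a i +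
        ∑ i ∈ range n, (j.choose i : ℝ) * a (i + 1) := by
  rw [sum_range_succ' _ n, sum_range_succ' (fun i => (j.choose i : ℝ) * a i) n,
    add_comm _ (∑ i ∈ range n, _), ← add_assoc, ← sum_add_distrib]
  simp only [Nat.choose_succ_succ', Nat.cast_add, add_mul, Nat.choose_zero_right]

lemma sum_range_succ_choose_sub_mul (b : ℕ → ℝ) (k j : ℕ) :
    ∑ l ∈ range (j + 1), ((j - l).choose (k + 1) : ℝ) * b l =
      ∑ l ∈ range j, ((j - 1 - l).choose (k + 1) : ℝ) * b l +
        ∑ l ∈ range j, ((j - 1 - l).choose k : ℝ) * b l := by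
  rw [sum_range_succ, Nat.sub_self, Nat.choose_zero_succ, Nat.cast_zero, zero_mul, add_zero,
    ← sum_add_distrib]
  refine sum_congr rfl fun l hl => ?_
  rw [show j - l = j - 1 - l + 1 by have := mem_range.mp hl; omega, Nat.choose_succ_succ']
  push_cast; ring

theorem diffOp_taylor (k : ℕ) (f : ℕ → ℝ) (j : ℕ) :
    f j = ∑ i ∈ range (k + 1), (j.choose i : ℝ) * diffOp^[i] f 0 +
      ∑ l ∈ range j, ((j - 1 - l).choose k : ℝ) * diffOp^[k + 1] f l := by
  induction k generalizing f j with
  | zero =>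
    simp only [zero_add, range_one, sum_singleton, Nat.choose_zero_right, Nat.cast_one, one_mul,
      Function.iterate_one, diffOp]
    rw [sum_range_sub f j]; simp
  | succ k ih =>
    induction j with
    | zero => rw [sum_range_succ']; simp
    | succ j ihj =>
      have hΔ := ih (diffOp f) j
      simp only [← Function.iterate_succ_apply] at hΔ
      rw [sum_range_succ_choose_mul, Nat.add_sub_cancel, sum_range_succ_choose_sub_mul]
      have : f (j + 1) = f j + diffOp f j := by simp [diffOp]
      rw [this, ihj, hΔ]
      simp only [Function.iterate_succ_apply]
      ring

lemma abs_sum_choose_sub_mul_le {k t j : ℕ} (hj : j < t) (d : ℕ → ℝ) :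
    |∑ l ∈ range j, ((j - 1 - l).choose k : ℝ) * d l| ≤
      t ^ k * ∑ l ∈ range (t - (k + 1)), |d l| := by
  calc |∑ l ∈ range j, ((j - 1 - l).choose k : ℝ) * d l|
      ≤ ∑ l ∈ range j, ((j - 1 - l).choose k : ℝ) * |d l| :=
        (abs_sum_le_sum_abs _ _).trans_eq (by simp only [abs_mul, Nat.abs_cast])
    _ = ∑ l ∈ range j with l < t - (k + 1), ((j - 1 - l).choose k : ℝ) * |d l| := by
        refine (sum_filter_of_ne fun l hl h => ?_).symm
        have : k ≤ j - 1 - l := by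
          by_contra hlt
          rw [Nat.choose_eq_zero_of_lt (by omega), Nat.cast_zero, zero_mul] at h
          exact h rfl
        have := mem_range.mp hl
        omega
    _ ≤ ∑ l ∈ range (t - (k + 1)), ((j - 1 - l).choose k : ℝ) * |d l| :=
        sum_le_sum_of_subset_of_nonneg (fun l hl => mem_range.mpr (mem_filter.mp hl).2)
          fun _ _ _ => by positivity
    _ ≤ ∑ l ∈ range (t - (k + 1)), (t : ℝ) ^ k * |d l| := by
        gcongr
        exact_mod_cast (Nat.choose_le_pow _ _).trans (Nat.pow_le_pow_left (by omega) k)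
    _ = t ^ k * ∑ l ∈ range (t - (k + 1)), |d l| := (mul_sum _ _ _).symm

lemma exists_natDegree_le_eval_succ_eq_sum_choose (k : ℕ) (c : ℕ → ℝ) :
    ∃ p : ℝ[X], p.natDegree ≤ k ∧
      ∀ j : ℕ, p.eval ((j : ℝ) + 1) = ∑ i ∈ range (k + 1), (j.choose i : ℝ) * c i := by
  refine ⟨∑ i ∈ range (k + 1), C (c i / i.factorial) * (descPochhammer ℝ i).comp (X - 1),
    natDegree_sum_le_of_forall_le _ _ fun i hi => ?_, fun j => ?_⟩
  · refine (natDegree_C_mul_le _ _).trans ?_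
    rw [natDegree_comp, descPochhammer_natDegree, ← C_1, natDegree_X_sub_C, mul_one]
    exact Nat.lt_succ_iff.mp (mem_range.mp hi)
  · simp only [eval_finsetSum, eval_mul, eval_C, eval_comp, eval_sub, eval_X, eval_one,
      add_sub_cancel_right, descPochhammer_eval_eq_descFactorial,
      Nat.descFactorial_eq_factorial_mul_choose, Nat.cast_mul]
    refine sum_congr rfl fun i _ => ?_
    field_simp

lemma designMatR_mulVec_apply {t m : ℕ} (a : Fin m → ℝ) (j : Fin t) :
    (designMatR t m *ᵥ a) j = (∑ i, C (a i) * X ^ (i : ℕ)).eval ((j : ℝ) + 1) := by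
  simp only [mulVec, dotProduct, designMatR, of_apply, eval_finsetSum, eval_mul, eval_C,
    eval_pow, eval_X, mul_comm]

lemma designMatR_mulVec_coeff {k t : ℕ} {p : ℝ[X]} (hp : p.natDegree ≤ k) (j : Fin t) :
    (designMatR t (k + 1) *ᵥ fun i => p.coeff i) j = p.eval ((j : ℝ) + 1) := by
  rw [eval_eq_sum_range' (Nat.lt_succ_of_le hp), ← Fin.sum_univ_eq_sum_range]
  simp only [mulVec, dotProduct, designMatR, of_apply, mul_comm]

theorem exists_eq_designMatR_mulVec_add (k t : ℕ) (θ : Fin t → ℝ) :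
    ∃ a w, θ = designMatR t (k + 1) *ᵥ a + w ∧ ∀ j, |w j| ≤ t ^ k * tvNorm k t θ := by
  set f : ℕ → ℝ := fun i => if h : i < t then θ ⟨i, h⟩ else 0
  obtain ⟨p, hp, hpf⟩ := exists_natDegree_le_eval_succ_eq_sum_choose k fun i => diffOp^[i] f 0
  refine ⟨fun i => p.coeff i,
    fun j => ∑ l ∈ range j, ((j - 1 - l).choose k : ℝ) * diffOp^[k + 1] f l,
    funext fun j => ?_, fun j => abs_sum_choose_sub_mul_le j.isLt _⟩
  rw [Pi.add_apply, designMatR_mulVec_coeff hp, hpf, ← diffOp_taylor]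
  simp [f]

lemma abs_eval_le_of_separated {ι : Type*} [DecidableEq ι] {s : Finset ι} {v : ι → ℝ}
    {δ L x : ℝ} (hδ : 0 < δ) (hsep : ∀ i ∈ s, ∀ j ∈ s, i ≠ j → δ ≤ |v i - v j|)
    (hx : ∀ i ∈ s, |x - v i| ≤ L) {p : ℝ[X]} (hp : p.degree < #s) :
    |p.eval x| ≤ (L / δ) ^ (#s - 1) * ∑ i ∈ s, |p.eval (v i)| := by
  have hinj : Set.InjOn v s := fun i hi j hj hij => by
    by_contra h
    have := hsep i hi j hj h
    rw [hij, sub_self, abs_zero] at this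
    linarith
  have hbasis : ∀ i ∈ s, |(Lagrange.basis s v i).eval x| ≤ (L / δ) ^ (#s - 1) := by
    intro i hi
    rw [Lagrange.basis, eval_prod, abs_prod, ← card_erase_of_mem hi, ← prod_const]
    refine prod_le_prod (fun _ _ => abs_nonneg _) fun j hj => ?_
    obtain ⟨hji, hj⟩ := mem_erase.mp hj
    rw [Lagrange.basisDivisor, eval_mul, eval_C, eval_sub, eval_X, eval_C, abs_mul, abs_inv,
      inv_mul_eq_div]
    exact div_le_div₀ ((abs_nonneg _).trans (hx j hj)) (hx j hj) hδ
      (hsep i hi j hj (Ne.symm hji))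
  conv_lhs => rw [Lagrange.eq_interpolate hinj hp]
  rw [Lagrange.interpolate_apply, eval_finsetSum, mul_sum]
  refine (abs_sum_le_sum_abs _ _).trans (sum_le_sum fun i hi => ?_)
  rw [eval_mul, eval_C, abs_mul, mul_comm]
  exact mul_le_mul_of_nonneg_right (hbasis i hi) (abs_nonneg _)

lemma sum_sum_add_mul_eq_sum {M : Type*} [AddCommMonoid M] (n m : ℕ) (g : ℕ → M) :
    ∑ r : Fin m, ∑ l : Fin n, g (r + m * l) = ∑ j : Fin (n * m), g j := by
  rw [Finset.sum_comm, ← Fintype.sum_prod_type', ← finProdFinEquiv.sum_comp]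
  simp only [finProdFinEquiv_apply_val]

lemma sq_eval_le_sum_sq_arithProg {k t m r : ℕ} (hrm : r < m) (hmt : (k + 1) * m ≤ t)
    (htm : (t : ℝ) ≤ 2 * (k + 1) * m) {p : ℝ[X]} (hp : p.natDegree ≤ k) {x : ℝ}
    (hx : x ∈ Set.Icc 1 (t : ℝ)) :
    p.eval x ^ 2 ≤ (k + 1) * (2 * (k + 1)) ^ (2 * k) *
      ∑ l : Fin (k + 1), p.eval (((r + m * l : ℕ) : ℝ) + 1) ^ 2 := by
  set v : Fin (k + 1) → ℝ := fun l => ((r + m * l : ℕ) : ℝ) + 1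
  have hm : (0 : ℝ) < m := by exact_mod_cast r.zero_le.trans_lt hrm
  have hsep : ∀ l ∈ (univ : Finset (Fin (k + 1))), ∀ l' ∈ univ, l ≠ l' →
      (m : ℝ) ≤ |v l - v l'| := by
    intro l _ l' _ hll'
    have hone : (1 : ℤ) ≤ |((l : ℕ) : ℤ) - (l' : ℕ)| :=
      Int.one_le_abs (sub_ne_zero.mpr (Nat.cast_injective.ne (Fin.val_ne_of_ne hll')))
    replace hone : (1 : ℝ) ≤ |((l : ℕ) : ℝ) - (l' : ℕ)| := by exact_mod_cast hone
    have : v l - v l' = m * (((l : ℕ) : ℝ) - (l' : ℕ)) := by simp only [v]; push_cast; ring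
    rw [this, abs_mul, Nat.abs_cast]
    nlinarith
  have hx' : ∀ l ∈ (univ : Finset (Fin (k + 1))), |x - v l| ≤ t := by
    intro l _
    have hvt : v l ≤ t := by
      simp only [v]; exact_mod_cast (by nlinarith [l.isLt] : r + m * l + 1 ≤ t)
    have hv1 : 1 ≤ v l := le_add_of_nonneg_left (Nat.cast_nonneg _)
    exact abs_sub_le_iff.mpr ⟨by linarith [hx.2], by linarith [hx.1]⟩
  have hdeg : p.degree < #(univ : Finset (Fin (k + 1))) := by
    rw [card_univ, Fintype.card_fin]
    exact (degree_le_of_natDegree_le hp).trans_lt (by exact_mod_cast k.lt_succ_self)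
  have hL := abs_eval_le_of_separated hm hsep hx' hdeg
  rw [card_univ, Fintype.card_fin, Nat.add_sub_cancel] at hL
  have hratio : (t : ℝ) / m ≤ 2 * (k + 1) := by rw [div_le_iff₀ hm]; linarith
  have hL' : |p.eval x| ≤ (2 * (k + 1)) ^ k * ∑ l, |p.eval (v l)| :=
    hL.trans (mul_le_mul_of_nonneg_right (pow_le_pow_left₀ (by positivity) hratio k)
      (sum_nonneg fun _ _ => abs_nonneg _))
  calc p.eval x ^ 2 = |p.eval x| ^ 2 := (sq_abs _).symm
    _ ≤ ((2 * (k + 1)) ^ k * ∑ l, |p.eval (v l)|) ^ 2 := pow_le_pow_left₀ (abs_nonneg _) hL' 2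
    _ ≤ (2 * (k + 1)) ^ (2 * k) * ((k + 1) * ∑ l, p.eval (v l) ^ 2) := by
        rw [mul_pow, ← pow_mul, mul_comm k 2]
        gcongr
        simpa using sq_sum_le_card_mul_sum_sq (s := univ) (f := fun l => |p.eval (v l)|)
    _ = _ := by ring

theorem mul_sq_eval_le_sum_sq {k t : ℕ} (hkt : k + 1 ≤ t) {p : ℝ[X]} (hp : p.natDegree ≤ k)
    {x : ℝ} (hx : x ∈ Set.Icc 1 (t : ℝ)) :
    t * p.eval x ^ 2 ≤
      (2 * (k + 1)) ^ (2 * (k + 1)) * ∑ j : Fin t, p.eval ((j : ℝ) + 1) ^ 2 := by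
  set m := t / (k + 1)
  have hmt : (k + 1) * m ≤ t := Nat.mul_div_le t (k + 1)
  have htm : (t : ℝ) ≤ 2 * (k + 1) * m := by
    have : t < (k + 1) * (m + 1) := Nat.lt_mul_div_succ t (by omega)
    have : 0 < m := Nat.div_pos hkt (by omega)
    exact_mod_cast (by nlinarith : t ≤ 2 * (k + 1) * m)
  set S : ℕ → ℝ := fun j => p.eval ((j : ℝ) + 1) ^ 2
  set K : ℝ := (k + 1) * (2 * (k + 1)) ^ (2 * k)
  -- `{1, …, (k + 1) m}` is the disjoint union of the progressions `r + 1 + m ℕ`, `r < m`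
  have hsum : (m : ℝ) * p.eval x ^ 2 ≤ K * ∑ j : Fin t, S j := by
    calc (m : ℝ) * p.eval x ^ 2 = ∑ _r : Fin m, p.eval x ^ 2 := by simp
      _ ≤ ∑ r : Fin m, K * ∑ l : Fin (k + 1), S (r + m * l) :=
        sum_le_sum fun r _ => sq_eval_le_sum_sq_arithProg r.isLt hmt htm hp hx
      _ = K * ∑ j : Fin ((k + 1) * m), S j := by rw [← mul_sum, sum_sum_add_mul_eq_sum]
      _ ≤ K * ∑ j : Fin t, S j := by
        gcongr
        rw [Fin.sum_univ_eq_sum_range S, Fin.sum_univ_eq_sum_range S]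
        exact sum_le_sum_of_subset_of_nonneg (range_mono hmt) fun _ _ _ => sq_nonneg _
  have hS : 0 ≤ (2 * (k + 1) : ℝ) ^ (2 * k) * ∑ j : Fin t, S j := by positivity
  calc (t : ℝ) * p.eval x ^ 2 ≤ 2 * (k + 1) * (m * p.eval x ^ 2) := by
        rw [← mul_assoc]; exact mul_le_mul_of_nonneg_right htm (sq_nonneg _)
    _ ≤ 2 * (k + 1) * (K * ∑ j : Fin t, S j) := by gcongr
    _ ≤ (2 * (k + 1)) ^ 2 * ((2 * (k + 1)) ^ (2 * k) * ∑ j : Fin t, S j) := by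
        simp only [K]; nlinarith
    _ = (2 * (k + 1)) ^ (2 * (k + 1)) * ∑ j : Fin t, S j := by ring

section HatMatrix

variable {m n : Type*} [Fintype m] [Fintype n] [DecidableEq n] (X : Matrix m n ℝ)

noncomputable def hatMat : Matrix m m ℝ := X * (Xᵀ * X)⁻¹ * Xᵀ

lemma hatMat_transpose : (hatMat X)ᵀ = hatMat X := by
  simp only [hatMat, transpose_mul, transpose_transpose, transpose_nonsing_inv, Matrix.mul_assoc]

variable {X}

lemma hatMat_mul_self (hX : IsUnit (Xᵀ * X).det) : hatMat X * X = X := by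
  rw [hatMat, Matrix.mul_assoc, Matrix.mul_assoc, nonsing_inv_mul _ hX, Matrix.mul_one]

lemma hatMat_mul_hatMat (hX : IsUnit (Xᵀ * X).det) : hatMat X * hatMat X = hatMat X := by
  nth_rewrite 2 [hatMat]
  rw [← Matrix.mul_assoc, ← Matrix.mul_assoc, hatMat_mul_self hX, hatMat]

lemma hatMat_apply_self_eq_sum_sq (hX : IsUnit (Xᵀ * X).det) (i : m) :
    hatMat X i i = ∑ j, hatMat X i j ^ 2 := by
  conv_lhs => rw [← hatMat_mul_hatMat hX, mul_apply]
  refine sum_congr rfl fun j _ => ?_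
  rw [← transpose_apply (hatMat X) j i, hatMat_transpose, sq]

lemma sq_sum_abs_hatMat_le (hX : IsUnit (Xᵀ * X).det) (i : m) :
    (∑ j, |hatMat X i j|) ^ 2 ≤ Fintype.card m * hatMat X i i := by
  simpa [hatMat_apply_self_eq_sum_sq hX i] using sq_sum_le_card_mul_sum_sq (s := univ)
    (f := fun j => |hatMat X i j|)

/-- The `i`-th column of `P` is of the form `X a` and has squared norm `Pᵢᵢ`. -/
lemma card_mul_hatMat_apply_self_le (hX : IsUnit (Xᵀ * X).det) {c : ℝ} (hc : 0 ≤ c)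
    (hXc : ∀ a i, Fintype.card m * (X *ᵥ a) i ^ 2 ≤ c * ∑ j, (X *ᵥ a) j ^ 2) (i : m) :
    Fintype.card m * hatMat X i i ≤ c := by
  have hcol : ∀ j, hatMat X j i = (X *ᵥ fun l => ((Xᵀ * X)⁻¹ * Xᵀ) l i) j := fun j => by
    rw [hatMat, Matrix.mul_assoc]; rfl
  have hnorm : ∑ j, hatMat X j i ^ 2 = hatMat X i i := by
    rw [hatMat_apply_self_eq_sum_sq hX]
    refine sum_congr rfl fun j _ => ?_
    rw [← transpose_apply (hatMat X) i j, hatMat_transpose]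
  have h := hXc (fun l => ((Xᵀ * X)⁻¹ * Xᵀ) l i) i
  simp only [← hcol, hnorm] at h
  rcases (hnorm ▸ sum_nonneg fun j _ => sq_nonneg _ : 0 ≤ hatMat X i i).eq_or_lt with h0 | hpos
  · rw [← h0, mul_zero]; exact hc
  · exact le_of_mul_le_mul_right (by linarith) hpos

end HatMatrix

lemma designMatR_mulVec_injective {t m : ℕ} (hmt : m ≤ t) :
    Function.Injective (designMatR t m).mulVec := by
  have hV : (vandermonde fun i : Fin m => ((i : ℕ) : ℝ) + 1).det ≠ 0 :=
    det_vandermonde_ne_zero_iff.mpr fun i j h => Fin.ext (by exact_mod_cast add_right_cancel h)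
  exact (injective_iff_map_eq_zero (designMatR t m).mulVecLin).mpr fun a ha =>
    eq_zero_of_mulVec_eq_zero hV (funext fun i => congrFun ha (Fin.castLE hmt i))

lemma isUnit_det_gram_designMatR {t m : ℕ} (hmt : m ≤ t) :
    IsUnit ((designMatR t m)ᵀ * designMatR t m).det := by
  rw [← isUnit_iff_isUnit_det, ← conjTranspose_eq_transpose_of_trivial]
  exact (PosDef.conjTranspose_mul_self _ (designMatR_mulVec_injective hmt)).isUnit

lemma sum_abs_hatMat_designMatR_le {k t : ℕ} (hkt : k + 1 ≤ t) (i : Fin t) :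
    ∑ j, |hatMat (designMatR t (k + 1)) i j| ≤ (2 * (k + 1)) ^ (k + 1) := by
  have hX := isUnit_det_gram_designMatR hkt
  have hnikolskii : ∀ (a : Fin (k + 1) → ℝ) (i : Fin t),
      Fintype.card (Fin t) * (designMatR t (k + 1) *ᵥ a) i ^ 2 ≤
        (2 * (k + 1)) ^ (2 * (k + 1)) * ∑ j, (designMatR t (k + 1) *ᵥ a) j ^ 2 := fun a i => by
    simpa only [Fintype.card_fin, designMatR_mulVec_apply] using
      mul_sq_eval_le_sum_sq hkt
        (natDegree_sum_le_of_forall_le _ _ fun l _ => (natDegree_C_mul_X_pow_le (a l) l).trans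
          (Nat.lt_succ_iff.mp l.isLt))
        ⟨le_add_of_nonneg_left (Nat.cast_nonneg _), by exact_mod_cast i.isLt⟩
  have hlev := card_mul_hatMat_apply_self_le hX (by positivity) hnikolskii i
  rw [← pow_le_pow_iff_left₀ (sum_nonneg fun _ _ => abs_nonneg _) (by positivity) two_ne_zero,
    ← pow_mul, mul_comm (k + 1)]
  exact (sq_sum_abs_hatMat_le hX i).trans hlev

lemma abs_mulVec_apply_le {m n : Type*} [Fintype n] (A : Matrix m n ℝ) {w : n → ℝ} {B : ℝ}
    (hw : ∀ j, |w j| ≤ B) (i : m) : |(A *ᵥ w) i| ≤ (∑ j, |A i j|) * B := by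
  rw [sum_mul]
  refine (abs_sum_le_sum_abs _ _).trans (sum_le_sum fun j _ => ?_)
  rw [abs_mul]
  exact mul_le_mul_of_nonneg_left (hw j) (abs_nonneg _)

lemma recenter_eq_sub_hatMat_mulVec (k t : ℕ) (θ : Fin t → ℝ) :
    recenter k t θ = θ - hatMat (designMatR t (k + 1)) *ᵥ θ := by
  simp only [recenter, hatMat, mulVec_mulVec, Matrix.mul_assoc]

lemma recenter_add_designMatR_mulVec {k t : ℕ} (hkt : k + 1 ≤ t) (a : Fin (k + 1) → ℝ)
    (w : Fin t → ℝ) :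
    recenter k t (designMatR t (k + 1) *ᵥ a + w) = w - hatMat (designMatR t (k + 1)) *ᵥ w := by
  rw [recenter_eq_sub_hatMat_mulVec, mulVec_add, mulVec_mulVec,
    hatMat_mul_self (isUnit_det_gram_designMatR hkt)]
  abel

/-- Sup-norm bound on the OLS residual in terms of the `TV^k`
distance: `‖recenter(θ)‖_∞ ≤ c_k · t^k ‖D^{k+1}θ‖₁` for `t ≥ k + 2`, where `c_k > 0`
depends only on `k`. -/
theorem stmt4 (k : ℕ) :
    ∃ c : ℝ, 0 < c ∧
      ∀ t : ℕ, k + 2 ≤ t → ∀ θ : Fin t → ℝ, ∀ i : Fin t,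
        |recenter k t θ i| ≤ c * (t : ℝ) ^ k * tvNorm k t θ := by
  refine ⟨1 + (2 * (k + 1)) ^ (k + 1), by positivity, fun t ht θ i => ?_⟩
  obtain ⟨a, w, rfl, hw⟩ := exists_eq_designMatR_mulVec_add k t θ
  set B := (t : ℝ) ^ k * tvNorm k t (designMatR t (k + 1) *ᵥ a + w)
  have hB : 0 ≤ B := (abs_nonneg _).trans (hw i)
  rw [recenter_add_designMatR_mulVec (by omega), Pi.sub_apply]
  calc |w i - (hatMat (designMatR t (k + 1)) *ᵥ w) i|
      ≤ |w i| + |(hatMat (designMatR t (k + 1)) *ᵥ w) i| := abs_sub _ _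
    _ ≤ B + (∑ j, |hatMat (designMatR t (k + 1)) i j|) * B :=
        add_le_add (hw i) (abs_mulVec_apply_le _ hw i)
    _ ≤ B + (2 * (k + 1)) ^ (k + 1) * B := by
        gcongr; exact sum_abs_hatMat_designMatR_le (by omega) i
    _ = (1 + (2 * (k + 1)) ^ (k + 1)) * (t : ℝ) ^ k * tvNorm k t _ := by ring
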